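/- arXiv:1607.07011 — 3 statements merged into one kernel-verified Lean document; each statement's English description precedes it below -/
import Mathlib

section
/- Let g ≥ 2 be an integer, let s ≥ 1 be an integer and set m = g^s. Then for every integer d ≥ 2, l_g(d) ≤ (m − g) + ⌊log_g d⌋ + μ_m(d), where μ_m(d) is the number of nonzero digits of d in base m. -/
/-- `IsGAddChain g a r d` says that `a 0 = 1, a 1, …, a r = d` is a `g`-addition chain
for `d`: each term `a i` (for `1 ≤ i ≤ r`) is a sum `a (j 1) + ⋯ + a (j k)` of `k`
earlier terms, where `2 ≤ k ≤ g` and `j 1 ≤ ⋯ ≤ j k ≤ i - 1`. -/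
def IsGAddChain (g : ℕ) (a : ℕ → ℕ) (r : ℕ) (d : ℕ) : Prop :=
  a 0 = 1 ∧ a r = d ∧
  ∀ i, 1 ≤ i → i ≤ r →
    ∃ k, 2 ≤ k ∧ k ≤ g ∧
      ∃ j : Fin k → ℕ, Monotone j ∧ (∀ t, j t ≤ i - 1) ∧
        a i = ∑ t, a (j t)

/-- `gAddChainLength g d` is `l_g(d)`, the length of a shortest `g`-addition chain for `d`. -/
noncomputable def gAddChainLength (g d : ℕ) : ℕ :=
  sInf {r | ∃ a : ℕ → ℕ, IsGAddChain g a r d}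

/-- `nonzeroDigits m d` is `μ_m(d)`, the number of nonzero digits of `d` in base `m`. -/
def nonzeroDigits (m d : ℕ) : ℕ :=
  ((Nat.digits m d).filter (· ≠ 0)).length

/-!
First build the chain `1, g, g + 1, …, m - 1` in `m - g` steps. Every nonzero base-`m` digit
`c` is then `α * x` with `1 ≤ α < g` and `x` in this table. Now evaluate `d` by Horner's rule
in base `m`, starting from its leading digit (at most one more step). Passing from `w` to
`w * m + c` costs `s` multiplications by `g`, plus one extra step when `c ≠ 0`: with
`w' = w * g ^ (s - 1)`, form `y = α * x + (g - α) * w'` and then `α * w' + y = g * w' + c`.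
Finally `s * ⌊log_m d⌋ ≤ ⌊log_g d⌋`.
-/

open Set

def IsGAddStep (g : ℕ) (a : ℕ → ℕ) (n x : ℕ) : Prop :=
  ∃ k, 2 ≤ k ∧ k ≤ g ∧ ∃ j : Fin k → ℕ, Monotone j ∧ (∀ t, j t ≤ n) ∧ x = ∑ t, a (j t)

lemma IsGAddStep.congr {g n x : ℕ} {a b : ℕ → ℕ} (h : IsGAddStep g a n x)
    (hab : ∀ i ≤ n, a i = b i) : IsGAddStep g b n x := by
  obtain ⟨k, hk, hkg, j, hj, hjn, rfl⟩ := h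
  exact ⟨k, hk, hkg, j, hj, hjn, Finset.sum_congr rfl fun t _ => hab _ (hjn t)⟩

lemma isGAddStep_mul_add_mul {g n i j p q : ℕ} (a : ℕ → ℕ) (hi : i ≤ n) (hj : j ≤ n)
    (hpq : 2 ≤ p + q) (hpqg : p + q ≤ g) : IsGAddStep g a n (p * a i + q * a j) := by
  wlog hij : i ≤ j generalizing i j p q
  · rw [add_comm]
    exact this hj hi (by omega) (by omega) (by omega)
  refine ⟨p + q, hpq, hpqg, fun t => if (t : ℕ) < p then i else j, ?_, ?_, ?_⟩
  · intro t₁ t₂ (h : (t₁ : ℕ) ≤ t₂)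
    dsimp only
    split_ifs <;> omega
  · intro t
    dsimp only
    split_ifs <;> omega
  · simp [Fin.sum_univ_add]

def IsGAddSeq (g : ℕ) (a : ℕ → ℕ) (r : ℕ) : Prop :=
  a 0 = 1 ∧ ∀ i, 1 ≤ i → i ≤ r → IsGAddStep g a (i - 1) (a i)

lemma IsGAddSeq.isGAddChain {g r i : ℕ} {a : ℕ → ℕ} (h : IsGAddSeq g a r) (hi : i ≤ r) :
    IsGAddChain g a i (a i) :=
  ⟨h.1, rfl, fun k hk hki => h.2 k hk (hki.trans hi)⟩

lemma IsGAddSeq.update_succ {g r x : ℕ} {a : ℕ → ℕ} (h : IsGAddSeq g a r)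
    (hx : IsGAddStep g a r x) : IsGAddSeq g (Function.update a (r + 1) x) (r + 1) := by
  have hagree : ∀ i ≤ r, a i = Function.update a (r + 1) x i := fun i hi =>
    (Function.update_of_ne (by omega) _ _).symm
  refine ⟨(hagree 0 (Nat.zero_le r)) ▸ h.1, fun i hi hir => ?_⟩
  rcases Nat.lt_or_ge i (r + 1) with hlt | hge
  · rw [← hagree i (by omega)]
    exact (h.2 i hi (by omega)).congr fun k hk => hagree k (by omega)
  · obtain rfl : i = r + 1 := by omega
    rw [Function.update_self]
    exact hx.congr hagree

def GAddCovers (g r : ℕ) (S : Set ℕ) : Prop :=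
  ∃ a, IsGAddSeq g a r ∧ S ⊆ a '' Iic r

namespace GAddCovers

variable {g r w : ℕ} {S T : Set ℕ}

lemma mono (h : GAddCovers g r S) (hTS : T ⊆ S) : GAddCovers g r T :=
  let ⟨a, ha, hS⟩ := h
  ⟨a, ha, hTS.trans hS⟩

lemma gAddChainLength_le (h : GAddCovers g r S) {d : ℕ} (hd : d ∈ S) :
    gAddChainLength g d ≤ r := by
  obtain ⟨a, ha, hS⟩ := h
  obtain ⟨i, hir, rfl⟩ := hS hd
  have : gAddChainLength g (a i) ≤ i := Nat.sInf_le ⟨a, ha.isGAddChain hir⟩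
  exact this.trans hir

lemma insert_mul_add_mul (h : GAddCovers g r S) {u v p q : ℕ} (hu : u ∈ S) (hv : v ∈ S)
    (hpq : 2 ≤ p + q) (hpqg : p + q ≤ g) : GAddCovers g (r + 1) (insert (p * u + q * v) S) := by
  obtain ⟨a, ha, hS⟩ := h
  obtain ⟨i, hi : i ≤ r, rfl⟩ := hS hu
  obtain ⟨j, hj : j ≤ r, rfl⟩ := hS hv
  refine ⟨_, ha.update_succ (isGAddStep_mul_add_mul a hi hj hpq hpqg), ?_⟩
  rintro _ (rfl | hx)
  · exact ⟨r + 1, mem_Iic.2 le_rfl, Function.update_self _ _ _⟩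
  · obtain ⟨k, hk : k ≤ r, rfl⟩ := hS hx
    exact ⟨k, by simp only [mem_Iic]; omega, Function.update_of_ne (by omega) _ _⟩

lemma mul_pow (hg : 2 ≤ g) (h : GAddCovers g r (insert w S)) (n : ℕ) :
    GAddCovers g (r + n) (insert (w * g ^ n) S) := by
  induction n with
  | zero => simpa using h
  | succ n ih =>
    have hx := mem_insert (w * g ^ n) S
    refine (ih.insert_mul_add_mul hx hx (p := g) (q := 0) (by omega) (by omega)).mono ?_
    rw [pow_succ, zero_mul, add_zero, mul_comm g, ← mul_assoc]
    exact insert_subset_insert (subset_insert _ _)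

lemma mul_add (hg : 2 ≤ g) (h : GAddCovers g r (insert w S)) {α x : ℕ} (hα : 1 ≤ α)
    (hαg : α < g) (hx : x ∈ S) : GAddCovers g (r + 2) (insert (g * w + α * x) S) := by
  have h₁ := h.insert_mul_add_mul (mem_insert_of_mem w hx) (mem_insert w S) (p := α) (q := g - α)
    (by omega) (by omega)
  have h₂ := h₁.insert_mul_add_mul (mem_insert_of_mem _ (mem_insert w S)) (mem_insert _ _)
    (p := α) (q := 1) (by omega) (by omega)
  refine h₂.mono ?_
  have : α * w + 1 * (α * x + (g - α) * w) = g * w + α * x := by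
    rw [one_mul, add_left_comm, ← add_mul, Nat.add_sub_cancel' hαg.le, add_comm]
  rw [this]
  exact insert_subset_insert ((subset_insert _ _).trans (subset_insert _ _))

end GAddCovers

lemma gAddCovers_initial {g : ℕ} (hg : 2 ≤ g) : ∀ n, GAddCovers g n (insert 1 (Ico g (g + n)))
  | 0 => ⟨fun _ => 1, ⟨rfl, fun i hi hi0 => by omega⟩, by simp⟩
  | 1 => by
    have := (gAddCovers_initial hg 0).insert_mul_add_mul (mem_insert 1 _) (mem_insert 1 _)
      (p := g) (q := 0) (by omega) le_rfl
    refine this.mono fun x => ?_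
    simp only [mem_insert_iff, mem_Ico, mul_one, add_zero]
    omega
  | n + 2 => by
    have := (gAddCovers_initial hg (n + 1)).insert_mul_add_mul (mem_insert 1 _)
      (mem_insert_of_mem 1 (show g + n ∈ Ico g (g + (n + 1)) by simp)) (p := 1) (q := 1)
      le_rfl (by omega)
    refine this.mono fun x => ?_
    simp only [mem_insert_iff, mem_Ico, mul_one]
    omega

lemma nonzeroDigits_zero (m : ℕ) : nonzeroDigits m 0 = 0 := by
  simp [nonzeroDigits]

lemma nonzeroDigits_eq_div_add {m d : ℕ} (hm : 1 < m) (hd : 0 < d) :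
    nonzeroDigits m d = nonzeroDigits m (d / m) + if d % m = 0 then 0 else 1 := by
  unfold nonzeroDigits
  rw [Nat.digits_def' hm hd, List.filter_cons]
  split_ifs <;> simp_all

section Horner

variable {g s m : ℕ}

lemma exists_mul_eq_of_lt (hg : 2 ≤ g) {c : ℕ} (hc : 1 ≤ c) (hcm : c < m) :
    ∃ α x, 1 ≤ α ∧ α < g ∧ x ∈ insert 1 (Ico g m) ∧ α * x = c := by
  rcases Nat.lt_or_ge c g with hcg | hgc
  · exact ⟨c, 1, hc, hcg, mem_insert 1 _, mul_one c⟩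
  · exact ⟨1, c, le_rfl, hg, mem_insert_of_mem 1 ⟨hgc, hcm⟩, one_mul c⟩

lemma gAddCovers_leading_digit (hg : 2 ≤ g) (hgm : g ≤ m) {c : ℕ} (hc : 1 ≤ c) (hcm : c < m) :
    GAddCovers g (m - g + 1) (insert c (insert 1 (Ico g m))) := by
  by_cases hsmall : 2 ≤ c ∧ c < g
  · have h := gAddCovers_initial hg (m - g)
    rw [Nat.add_sub_cancel' hgm] at h
    have := h.insert_mul_add_mul (mem_insert 1 _) (mem_insert 1 _) (p := c) (q := 0)
      (by omega) (by omega)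
    simpa using this
  · refine (gAddCovers_initial hg (m - g + 1)).mono ?_
    intro x
    simp only [mem_insert_iff, mem_Ico]
    omega

lemma GAddCovers.horner_step (hg : 2 ≤ g) (hs : 1 ≤ s) (hm : m = g ^ s) {r w c : ℕ}
    (h : GAddCovers g r (insert w (insert 1 (Ico g m)))) (hcm : c < m) :
    GAddCovers g (r + s + if c = 0 then 0 else 1) (insert (w * m + c) (insert 1 (Ico g m))) := by
  rcases eq_or_ne c 0 with rfl | hc
  · simpa [hm] using h.mul_pow hg s
  · obtain ⟨α, x, hα, hαg, hx, rfl⟩ := exists_mul_eq_of_lt hg (by omega) hcm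
    have h' := (h.mul_pow hg (s - 1)).mul_add hg hα hαg hx
    have hgs : g * (w * g ^ (s - 1)) = w * m := by
      rw [hm, mul_left_comm, ← pow_succ', Nat.sub_add_cancel hs]
    rw [hgs] at h'
    rwa [if_neg hc, show r + s + 1 = r + (s - 1) + 2 by omega]

theorem gAddCovers_horner (hg : 2 ≤ g) (hs : 1 ≤ s) (hm : m = g ^ s) :
    ∀ d, 1 ≤ d → GAddCovers g (m - g + s * Nat.log m d + nonzeroDigits m d)
      (insert d (insert 1 (Ico g m))) := by
  have hgm : g ≤ m := hm ▸ Nat.le_self_pow (by omega) g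
  intro d
  induction d using Nat.strong_induction_on with
  | _ d ih =>
    intro hd
    rw [nonzeroDigits_eq_div_add (by omega) hd]
    rcases Nat.lt_or_ge d m with hdm | hmd
    · rw [Nat.log_of_lt hdm, Nat.div_eq_of_lt hdm, nonzeroDigits_zero,
        if_neg (by rw [Nat.mod_eq_of_lt hdm]; omega)]
      simpa using gAddCovers_leading_digit hg hgm hd hdm
    · have hq : 1 ≤ d / m := (Nat.one_le_div_iff (by omega)).2 hmd
      have hlog : Nat.log m d = Nat.log m (d / m) + 1 := by
        have := Nat.log_pos (by omega : 1 < m) hmd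
        rw [Nat.log_div_base]
        omega
      have := (ih (d / m) (Nat.div_lt_self hd (by omega)) hq).horner_step hg hs hm
        (Nat.mod_lt d (by omega : 0 < m))
      rw [Nat.div_add_mod'] at this
      convert this using 1
      rw [hlog]
      ring

end Horner

/-- for integers `g ≥ 2`, `s ≥ 1`, `m = g ^ s` and `d ≥ 2`,
`l_g(d) ≤ (m - g) + ⌊log_g d⌋ + μ_m(d)`. -/
theorem gAddChainLength_le_gpow_ary (g s m d : ℕ) (hg : 2 ≤ g) (hs : 1 ≤ s)
    (hm : m = g ^ s) (hd : 2 ≤ d) :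
    gAddChainLength g d ≤ (m - g) + Nat.log g d + nonzeroDigits m d := by
  have hlog : s * Nat.log m d ≤ Nat.log g d := by
    rw [Nat.le_log_iff_pow_le (by omega) (by omega), pow_mul, ← hm]
    exact Nat.pow_log_le_self m (by omega)
  have := (gAddCovers_horner hg hs hm d (by omega)).gAddChainLength_le (mem_insert d _)
  omega
end

section
/- Let g ≥ 2 be an integer. Then the ratio l_g(n)/λ_g(n) tends to 1 as the integer n tends to infinity. -/
/-! The term of index `i` of a `g`-addition chain is at most `g ^ i`, so `λ_g(n) ≤ l_g(n)`.
Conversely, fix `k ≥ 1`, start a chain with `1, 2, …, g ^ k - 1` and run Horner's scheme on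
the base-`g ^ k` digits of `n`: each digit costs `k` multiplications by `g` (a sum of `g` equal
terms) and one addition of the digit, so `l_g(n) ≤ g ^ k + (1 + 1/k) λ_g(n)`. Letting `n → ∞`
and then `k → ∞` squeezes `l_g(n) / λ_g(n)` to `1`. -/

open Set Filter Topology

namespace IsGAddChain

variable {g r d : ℕ} {a : ℕ → ℕ}

theorem le_pow (h : IsGAddChain g a r d) {i : ℕ} (hi : i ≤ r) : a i ≤ g ^ i := by
  induction i using Nat.strong_induction_on with
  | _ i ih =>
    rcases Nat.eq_zero_or_pos i with rfl | hi0
    · simp [h.1]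
    obtain ⟨k, hk2, hkg, j, -, hj, hsum⟩ := h.2.2 i hi0 hi
    have hterm : ∀ t, a (j t) ≤ g ^ (i - 1) := fun t =>
      (ih (j t) (by grind) (by grind)).trans (Nat.pow_le_pow_right (by omega) (hj t))
    calc a i = ∑ t, a (j t) := hsum
      _ ≤ ∑ _t : Fin k, g ^ (i - 1) := Finset.sum_le_sum fun t _ => hterm t
      _ = k * g ^ (i - 1) := by simp
      _ ≤ g * g ^ (i - 1) := Nat.mul_le_mul_right _ hkg
      _ = g ^ i := by rw [← pow_succ', Nat.sub_add_cancel hi0]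

theorem truncate (h : IsGAddChain g a r d) {p : ℕ} (hp : p ≤ r) : IsGAddChain g a p (a p) :=
  ⟨h.1, rfl, fun i hi hip => h.2.2 i hi (hip.trans hp)⟩

theorem gAddChainLength_le (h : IsGAddChain g a r d) : gAddChainLength g d ≤ r :=
  Nat.sInf_le ⟨a, h⟩

theorem snoc (h : IsGAddChain g a r d) {k : ℕ} (hk2 : 2 ≤ k) (hkg : k ≤ g) {j : Fin k → ℕ}
    (hj : Monotone j) (hjr : ∀ t, j t ≤ r) :
    IsGAddChain g (fun i => if i ≤ r then a i else ∑ t, a (j t)) (r + 1) (∑ t, a (j t)) := by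
  refine ⟨by simp [h.1], by simp, fun i hi hir => ?_⟩
  rcases Nat.lt_or_ge r i with hri | hir'
  · obtain rfl : i = r + 1 := by omega
    refine ⟨k, hk2, hkg, j, hj, hjr, ?_⟩
    simp [fun t => hjr t]
  · obtain ⟨k', hk2', hkg', j', hj', hj'i, hsum⟩ := h.2.2 i hi hir'
    refine ⟨k', hk2', hkg', j', hj', hj'i, ?_⟩
    simp only [hir', if_true, hsum]
    exact Finset.sum_congr rfl fun t _ => by rw [if_pos (by grind)]

end IsGAddChain

theorem isGAddChain_succ {g : ℕ} (hg : 2 ≤ g) (r : ℕ) : IsGAddChain g (· + 1) r (r + 1) := by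
  refine ⟨rfl, rfl, fun i hi _ => ⟨2, le_rfl, hg, ![0, i - 1], ?_, ?_, ?_⟩⟩
  · exact Fin.monotone_iff_le_succ.2 fun t => by fin_cases t; simp
  · intro t; fin_cases t <;> simp
  · simp [Fin.sum_univ_two]; omega

theorem log_le_gAddChainLength {g n : ℕ} (hg : 2 ≤ g) (hn : 1 ≤ n) :
    Nat.log g n ≤ gAddChainLength g n := by
  obtain ⟨a, ha⟩ : gAddChainLength g n ∈ {r | ∃ a, IsGAddChain g a r n} :=
    Nat.sInf_mem ⟨n - 1, _, by simpa [Nat.sub_add_cancel hn] using isGAddChain_succ hg (n - 1)⟩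
  have hpow : n ≤ g ^ gAddChainLength g n := by simpa [ha.2.1] using ha.le_pow le_rfl
  simpa [Nat.log_pow (by omega : 1 < g)] using Nat.log_mono_right (b := g) hpow

def ChainCovers (g r : ℕ) (S : Set ℕ) : Prop :=
  ∃ a d, IsGAddChain g a r d ∧ S ⊆ a '' Iic r

theorem IsGAddChain.chainCovers_snoc {g r d k : ℕ} {a : ℕ → ℕ} {S : Set ℕ}
    (h : IsGAddChain g a r d) (hS : S ⊆ a '' Iic r) (hk2 : 2 ≤ k) (hkg : k ≤ g)
    {j : Fin k → ℕ} (hj : Monotone j) (hjr : ∀ t, j t ≤ r) :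
    ChainCovers g (r + 1) (insert (∑ t, a (j t)) S) := by
  refine ⟨_, _, h.snoc hk2 hkg hj hjr, insert_subset ⟨r + 1, by simp⟩ ?_⟩
  rintro _ hs
  obtain ⟨i, hi, rfl⟩ := hS hs
  exact ⟨i, Nat.le_succ_of_le hi, if_pos hi⟩

namespace ChainCovers

variable {g r : ℕ} {S : Set ℕ}

theorem mono_set {T : Set ℕ} (h : ChainCovers g r S) (hTS : T ⊆ S) : ChainCovers g r T :=
  let ⟨a, d, ha, hS⟩ := h
  ⟨a, d, ha, hTS.trans hS⟩

theorem mul (hg : 2 ≤ g) (h : ChainCovers g r S) {x : ℕ} (hx : x ∈ S) :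
    ChainCovers g (r + 1) (insert (g * x) S) := by
  obtain ⟨a, d, ha, hS⟩ := h
  obtain ⟨p, hp, rfl⟩ := hS hx
  simpa using ha.chainCovers_snoc hS hg le_rfl (j := fun _ : Fin g => p) monotone_const
    fun _ => hp

theorem add (hg : 2 ≤ g) (h : ChainCovers g r S) {x z : ℕ} (hx : x ∈ S) (hz : z ∈ S) :
    ChainCovers g (r + 1) (insert (x + z) S) := by
  obtain ⟨a, d, ha, hS⟩ := h
  obtain ⟨p, hp, rfl⟩ := hS hx
  obtain ⟨q, hq, rfl⟩ := hS hz
  have hmono : Monotone ![min p q, max p q] :=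
    Fin.monotone_iff_le_succ.2 fun t => by fin_cases t; simp
  have hsum : ∑ t, a (![min p q, max p q] t) = a p + a q := by
    rcases le_total p q with hpq | hqp
    · simp [Fin.sum_univ_two, hpq]
    · simp [Fin.sum_univ_two, hqp, add_comm]
  rw [← hsum]
  exact ha.chainCovers_snoc hS le_rfl hg hmono fun t => by
    fin_cases t <;> simp only [mem_Iic] at hp hq <;> simp [hp, hq]

theorem succ (hg : 2 ≤ g) (h : ChainCovers g r S) : ChainCovers g (r + 1) S := by
  -- append `1 + 1`
  obtain ⟨a, d, ha, hS⟩ := h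
  have h1 : ChainCovers g r (insert 1 S) := ⟨a, d, ha, insert_subset ⟨0, by simp, ha.1⟩ hS⟩
  exact (h1.add hg (mem_insert 1 S) (mem_insert 1 S)).mono_set
    ((subset_insert _ _).trans (subset_insert _ _))

theorem mul_pow (hg : 2 ≤ g) (h : ChainCovers g r S) {x : ℕ} (hx : x ∈ S) (k : ℕ) :
    ChainCovers g (r + k) (insert (g ^ k * x) S) := by
  induction k with
  | zero => simpa [insert_eq_of_mem hx] using h
  | succ k ih =>
    have := ih.mul hg (mem_insert _ _)
    rw [← add_assoc, pow_succ', mul_assoc]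
    exact this.mono_set (insert_subset_insert (subset_insert _ _))

theorem mul_pow_add (hg : 2 ≤ g) (h : ChainCovers g r S) {x d : ℕ} (hx : x ∈ S)
    (hd : d = 0 ∨ d ∈ S) (k : ℕ) : ChainCovers g (r + k + 1) (insert (g ^ k * x + d) S) := by
  have hk := h.mul_pow hg hx k
  rcases hd with rfl | hd
  · simpa using hk.succ hg
  · exact (hk.add hg (mem_insert _ _) (mem_insert_of_mem _ hd)).mono_set
      (insert_subset_insert (subset_insert _ _))

theorem gAddChainLength_le (h : ChainCovers g r S) {n : ℕ} (hn : n ∈ S) :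
    gAddChainLength g n ≤ r := by
  obtain ⟨a, d, ha, hS⟩ := h
  obtain ⟨p, hp, rfl⟩ := hS hn
  exact ((ha.truncate hp).gAddChainLength_le).trans hp

end ChainCovers

theorem chainCovers_Icc {g : ℕ} (hg : 2 ≤ g) (r : ℕ) : ChainCovers g r (Icc 1 (r + 1)) := by
  refine ⟨_, _, isGAddChain_succ hg r, fun n hn => ⟨n - 1, ?_, ?_⟩⟩ <;>
    simp only [mem_Icc, mem_Iic] at hn ⊢ <;> omega

theorem chainCovers_horner {g k : ℕ} (hg : 2 ≤ g) (hk : 0 < k) {n : ℕ} (hn : 0 < n) :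
    ChainCovers g (g ^ k - 2 + (k + 1) * Nat.log (g ^ k) n) (insert n (Ico 1 (g ^ k))) := by
  have hm : 2 ≤ g ^ k := hg.trans (Nat.le_self_pow hk.ne' g)
  induction n using Nat.strong_induction_on with
  | _ n ih =>
  rcases Nat.lt_or_ge n (g ^ k) with hlt | hge
  · rw [Nat.log_of_lt hlt, mul_zero, add_zero]
    refine (chainCovers_Icc hg _).mono_set (insert_subset ?_ fun x hx => ?_)
    · simp only [mem_Icc]; omega
    · simp only [mem_Ico, mem_Icc] at hx ⊢; omega
  · have hq := ih (n / g ^ k) (Nat.div_lt_self hn (by omega)) (Nat.div_pos hge (by omega))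
    have hdigit : n % g ^ k = 0 ∨ n % g ^ k ∈ insert (n / g ^ k) (Ico 1 (g ^ k)) := by
      rcases Nat.eq_zero_or_pos (n % g ^ k) with h0 | h0
      · exact .inl h0
      · exact .inr (mem_insert_of_mem _ ⟨h0, Nat.mod_lt _ (by omega)⟩)
    have hlog : Nat.log (g ^ k) n = Nat.log (g ^ k) (n / g ^ k) + 1 := by
      rw [Nat.log_div_base]; have := Nat.log_pos (by omega) hge; omega
    have := (hq.mul_pow_add hg (mem_insert _ _) hdigit k).mono_set
      (insert_subset_insert (subset_insert _ _))
    rw [Nat.div_add_mod] at this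
    rwa [hlog, mul_add_one, ← add_assoc, ← add_assoc]

theorem gAddChainLength_le_log {g k n : ℕ} (hg : 2 ≤ g) (hk : 0 < k) (hn : 0 < n) :
    gAddChainLength g n ≤ g ^ k - 2 + (k + 1) * (Nat.log g n / k) := by
  rw [← Nat.log_pow_left]
  exact (chainCovers_horner hg hk hn).gAddChainLength_le (mem_insert _ _)

theorem one_le_gAddChainLength_div_log {g n : ℕ} (hg : 2 ≤ g) (hn : g ≤ n) :
    1 ≤ (gAddChainLength g n : ℝ) / Nat.log g n := by
  have hL : (0 : ℝ) < Nat.log g n := by exact_mod_cast Nat.log_pos (by omega) hn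
  rw [one_le_div hL]
  exact_mod_cast log_le_gAddChainLength hg (by omega)

theorem gAddChainLength_div_log_le {g k n : ℕ} (hg : 2 ≤ g) (hk : 0 < k) (hn : g ≤ n) :
    (gAddChainLength g n : ℝ) / Nat.log g n ≤ 1 + 1 / k + (g : ℝ) ^ k / Nat.log g n := by
  have hL : (0 : ℝ) < Nat.log g n := by exact_mod_cast Nat.log_pos (by omega) hn
  have hkR : (0 : ℝ) < k := by exact_mod_cast hk
  have hlen : (gAddChainLength g n : ℝ) ≤ (g : ℝ) ^ k + (k + 1) * (Nat.log g n / k) := by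
    have hdiv : ((Nat.log g n / k : ℕ) : ℝ) ≤ Nat.log g n / k := Nat.cast_div_le
    have hsub : ((g ^ k - 2 : ℕ) : ℝ) ≤ (g : ℝ) ^ k := by exact_mod_cast Nat.sub_le _ _
    calc (gAddChainLength g n : ℝ)
        ≤ ((g ^ k - 2 : ℕ) : ℝ) + (k + 1) * ((Nat.log g n / k : ℕ) : ℝ) := by
          exact_mod_cast gAddChainLength_le_log hg hk (by omega : 0 < n)
      _ ≤ _ := by gcongr
  rw [div_le_iff₀ hL]
  calc (gAddChainLength g n : ℝ) ≤ (g : ℝ) ^ k + (k + 1) * (Nat.log g n / k) := hlen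
    _ = (1 + 1 / k + (g : ℝ) ^ k / Nat.log g n) * Nat.log g n := by field_simp; ring

theorem tendsto_natLog_atTop {g : ℕ} (hg : 1 < g) :
    Tendsto (fun n => (Nat.log g n : ℝ)) atTop atTop :=
  tendsto_natCast_atTop_atTop.comp <|
    tendsto_atTop_atTop.2 fun b => ⟨g ^ b, fun _ hn => Nat.le_log_of_pow_le hg hn⟩

/-- for an integer `g ≥ 2`, `l_g(n) / λ_g(n) → 1` as `n → ∞`. -/
theorem gAddChainLength_div_log_tendsto_one (g : ℕ) (hg : 2 ≤ g) :
    Filter.Tendsto (fun n : ℕ => (gAddChainLength g n : ℝ) / (Nat.log g n : ℝ))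
      Filter.atTop (nhds 1) := by
  refine tendsto_order.2 ⟨fun b hb => ?_, fun b hb => ?_⟩
  · filter_upwards [eventually_ge_atTop g] with n hn
    exact hb.trans_le (one_le_gAddChainLength_div_log hg hn)
  · obtain ⟨k, hk⟩ := exists_nat_one_div_lt (sub_pos.2 hb)
    have hbound : Tendsto (fun n => 1 + 1 / (k + 1 : ℝ) + (g : ℝ) ^ (k + 1) / Nat.log g n)
        atTop (𝓝 (1 + 1 / (k + 1 : ℝ) + 0)) :=
      tendsto_const_nhds.add ((tendsto_natLog_atTop hg).const_div_atTop _)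
    have hlim : 1 + 1 / (k + 1 : ℝ) + 0 < b := by linarith
    filter_upwards [eventually_ge_atTop g, hbound.eventually (gt_mem_nhds hlim)] with n hn hlt
    have := gAddChainLength_div_log_le hg k.succ_pos hn
    push_cast at this
    exact this.trans_lt hlt
end

section
/- Let g ≥ 2 be an integer such that g + 1 is not a power of a prime (i.e., g + 1 has at least two distinct prime factors). Then l_g((g+1)^2) ≤ 3. -/
/-!
Write `g + 1 = s * t` with `s ≥ 3` and `t ≥ 2`, which is possible because `g + 1` is neither a
prime nor a power of `2`. Then `1, s, s * g, (g + 1) ^ 2` is a `g`-addition chain: `s` is a sum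
of `s ≤ g` ones, `s * g` a sum of `g` copies of `s`, and
`(g + 1) ^ 2 = t * s * (1 + g) = t * s + t * (s * g)` a sum of `2 * t ≤ g` earlier terms.
-/

theorem Nat.exists_mul_eq_of_not_isPrimePow {n : ℕ} (hn : 1 < n) (h : ¬IsPrimePow n) :
    ∃ s t, 3 ≤ s ∧ 2 ≤ t ∧ s * t = n := by
  obtain ⟨q, hq, hqn, hq2⟩ : ∃ q, q.Prime ∧ q ∣ n ∧ q ≠ 2 := by
    by_contra! hall
    have h2n : 2 ∣ n := hall _ (minFac_prime hn.ne') (minFac_dvd n) ▸ minFac_dvd n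
    exact h (isPrimePow_iff_unique_prime_dvd.2
      ⟨2, ⟨prime_two, h2n⟩, fun q ⟨hq, hqn⟩ => hall q hq hqn⟩)
  obtain ⟨t, rfl⟩ := hqn
  have ht1 : t ≠ 1 := by
    rintro rfl
    exact h (by simpa using hq.isPrimePow)
  have ht0 : t ≠ 0 := by
    rintro rfl
    omega
  exact ⟨q, t, by have := hq.two_le; omega, by omega, rfl⟩

theorem gAddChainLength_le {g r d : ℕ} {a : ℕ → ℕ} (ha : IsGAddChain g a r d) :
    gAddChainLength g d ≤ r :=
  Nat.sInf_le ⟨a, ha⟩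

theorem exists_monotone_sum_eq_add (a : ℕ → ℕ) {j j' : ℕ} (hj : j ≤ j') (c c' : ℕ) :
    ∃ idx : Fin (c + c') → ℕ, Monotone idx ∧ (∀ u, idx u ≤ j') ∧
      ∑ u, a (idx u) = c * a j + c' * a j' := by
  refine ⟨fun u => if (u : ℕ) < c then j else j', ?_, fun u => ?_, ?_⟩
  · intro u v huv
    have : (u : ℕ) ≤ v := huv
    dsimp only
    split_ifs <;> omega
  · dsimp only
    split_ifs <;> omega
  · simp [Fin.sum_univ_add]

theorem gAddChainLength_mul_mul_succ_le_three {g s t : ℕ} (hs : 2 ≤ s) (hsg : s ≤ g)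
    (ht : 1 ≤ t) (htg : 2 * t ≤ g) : gAddChainLength g (s * t * (g + 1)) ≤ 3 := by
  let a : ℕ → ℕ := fun i => [1, s, s * g, s * t * (g + 1)].getD i 0
  refine gAddChainLength_le (a := a) ⟨rfl, rfl, fun i hi hi3 => ?_⟩
  interval_cases i
  · obtain ⟨idx, hmono, hle, hsum⟩ := exists_monotone_sum_eq_add a le_rfl s 0
    exact ⟨s, hs, hsg, idx, hmono, hle, by simpa [a] using hsum.symm⟩
  · obtain ⟨idx, hmono, hle, hsum⟩ := exists_monotone_sum_eq_add a le_rfl g 0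
    exact ⟨g, by omega, le_rfl, idx, hmono, hle, by simpa [a, mul_comm] using hsum.symm⟩
  · obtain ⟨idx, hmono, hle, hsum⟩ := exists_monotone_sum_eq_add a (by norm_num : 1 ≤ 2) t t
    refine ⟨t + t, by omega, by omega, idx, hmono, hle, ?_⟩
    simp only [hsum, a, List.getD_cons_succ, List.getD_cons_zero]
    ring

/-- if `g ≥ 2` and `g + 1` is not a power of a prime, then
`l_g((g + 1) ^ 2) ≤ 3`. -/
theorem gAddChainLength_succ_sq_le_three (g : ℕ) (hg : 2 ≤ g)
    (h : ¬ IsPrimePow (g + 1)) :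
    gAddChainLength g ((g + 1) ^ 2) ≤ 3 := by
  obtain ⟨s, t, hs, ht, hst⟩ := Nat.exists_mul_eq_of_not_isPrimePow (by omega) h
  have hsg : s ≤ g := by nlinarith
  have htg : 2 * t ≤ g := by nlinarith
  simpa [sq, ← hst] using gAddChainLength_mul_mul_succ_le_three (by omega) hsg (by omega) htg
end
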